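/- arXiv:2409.14654 — 7 statements merged into one kernel-verified Lean document; each statement's English description precedes it below -/
import Mathlib

section
/- With T, SA, Ψ as above, Ψ is strictly increasing on each range of suffix-array positions whose suffixes begin with the same symbol: if T[SA[i]] = T[SA[i+1]] then Ψ(i) < Ψ(i+1). -/
/-- The suffix of `T` starting at position `i` (0-based), as a list. -/
def sufList {n : ℕ} (T : Fin (n+1) → ℕ) (i : Fin (n+1)) : List ℕ :=
  (List.ofFn T).drop i

/-- `SA` is the suffix array of `T`: it lists suffixes in increasing lexicographic order. -/
def IsSA {n : ℕ} (T : Fin (n+1) → ℕ) (SA : Equiv.Perm (Fin (n+1))) : Prop :=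
  ∀ i j : Fin (n+1), i < j → List.Lex (· < ·) (sufList T (SA i)) (sufList T (SA j))

/-- The last symbol of `T` is a unique terminator, strictly smaller than every other symbol. -/
def Terminator {n : ℕ} (T : Fin (n+1) → ℕ) : Prop :=
  ∀ i : Fin (n+1), i ≠ Fin.last n → T (Fin.last n) < T i

/-- Ψ(i) = SA⁻¹[(SA[i] mod n) + 1] (0-based, circular via `Fin` addition). -/
def psi {n : ℕ} (SA : Equiv.Perm (Fin (n+1))) (i : Fin (n+1)) : Fin (n+1) :=
  SA.symm (SA i + 1)

/-- BWT[j] = T[SA[j] - 1] (circularly). -/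
def bwt {n : ℕ} (T : Fin (n+1) → ℕ) (SA : Equiv.Perm (Fin (n+1))) (j : Fin (n+1)) : ℕ :=
  T (SA j - 1)

/-- LF(i): the suffix-array position of SA[i] − 1 (circularly). -/
def lf {n : ℕ} (SA : Equiv.Perm (Fin (n+1))) (i : Fin (n+1)) : Fin (n+1) :=
  SA.symm (SA i - 1)

/-- C[c]: the number of characters of `T` smaller than `c`. -/
def cnt {n : ℕ} (T : Fin (n+1) → ℕ) (c : ℕ) : ℕ :=
  (Finset.univ.filter fun i : Fin (n+1) => T i < c).card

/-- rank_c(f, i): number of occurrences of `c` in `f` at positions ≤ i (inclusive rank). -/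
def rankIncl {n : ℕ} (f : Fin (n+1) → ℕ) (c : ℕ) (i : Fin (n+1)) : ℕ :=
  (Finset.univ.filter fun j : Fin (n+1) => j ≤ i ∧ f j = c).card

/-- number of occurrences of `c` strictly before position `i`. -/
def rankBefore {n : ℕ} (f : Fin (n+1) → ℕ) (c : ℕ) (i : Fin (n+1)) : ℕ :=
  (Finset.univ.filter fun j : Fin (n+1) => j < i ∧ f j = c).card

/-- LF via the counting formula, as a natural number (0-based). -/
def lfCount {n : ℕ} (T : Fin (n+1) → ℕ) (SA : Equiv.Perm (Fin (n+1))) (i : Fin (n+1)) : ℕ :=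
  cnt T (bwt T SA i) + rankIncl (bwt T SA) (bwt T SA i) i - 1

/-- Position `j` is not the last element of its Ψ-run. -/
def NotLastInRun {n : ℕ} (T : Fin (n+1) → ℕ) (SA : Equiv.Perm (Fin (n+1)))
    (j : Fin (n+1)) : Prop :=
  j.val < n ∧ T (SA j) = T (SA (j+1)) ∧ ((psi SA (j+1) : ℕ) = (psi SA j : ℕ) + 1)

lemma sufList_eq_cons {n : ℕ} (T : Fin (n+1) → ℕ) (j : Fin (n+1)) (hj : j ≠ Fin.last n) :
    sufList T j = T j :: sufList T (j+1) := by
  have hlt : (j : ℕ) < n := lt_of_le_of_ne (Nat.lt_succ_iff.mp j.isLt)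
    (fun hc => hj (Fin.ext hc))
  have hv : ((j+1 : Fin (n+1)) : ℕ) = (j : ℕ) + 1 := by
    rw [Fin.val_add_one_of_lt]
    exact Fin.lt_last_iff_ne_last.mpr hj
  unfold sufList
  rw [List.drop_eq_getElem_cons (by simp [Nat.lt_succ_of_lt hlt]), hv,
    List.getElem_ofFn]

lemma lex_asymm {l₁ l₂ : List ℕ} (h₁ : List.Lex (· < ·) l₁ l₂)
    (h₂ : List.Lex (· < ·) l₂ l₁) : False :=
  absurd h₂ (asymm h₁)

/-- Ψ is strictly increasing on positions whose suffixes begin with the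
same symbol. -/
theorem psi_strictMono_on_char {n : ℕ} (T : Fin (n+1) → ℕ) (SA : Equiv.Perm (Fin (n+1)))
    (hSA : IsSA T SA) (hT : Terminator T) (i : Fin n)
    (h : T (SA i.castSucc) = T (SA i.succ)) :
    psi SA i.castSucc < psi SA i.succ := by
  set a := SA i.castSucc with ha
  set b := SA i.succ with hb
  have hab : a ≠ b := by
    intro hc
    have := SA.injective hc
    exact absurd this (by simp [Fin.ext_iff])
  have hbne : b ≠ Fin.last n := by
    intro hc
    apply hab
    rw [hc]
    by_contra hane2
    have := hT a hane2
    rw [h, hc] at this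
    exact lt_irrefl _ this
  have hane : a ≠ Fin.last n := by
    intro hc
    have := hT b hbne
    rw [← h, hc] at this
    exact lt_irrefl _ this
  have hlex : List.Lex (· < ·) (sufList T a) (sufList T b) :=
    hSA _ _ (by simp [Fin.lt_iff_val_lt_val])
  rw [sufList_eq_cons T a hane, sufList_eq_cons T b hbne, h] at hlex
  have hlex' : List.Lex (· < ·) (sufList T (a+1)) (sufList T (b+1)) := by
    cases hlex with
    | cons h' => exact h'
    | rel h' => exact absurd h' (lt_irrefl _)
  unfold psi
  rw [← ha, ← hb]
  rcases lt_trichotomy (SA.symm (a+1)) (SA.symm (b+1)) with hlt | heq | hgt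
  · exact hlt
  · exfalso
    have : a + 1 = b + 1 := by
      have := congrArg SA heq; simpa using this
    exact hab (add_right_cancel this)
  · exfalso
    have := hSA _ _ hgt
    simp only [Equiv.apply_symm_apply] at this
    exact lex_asymm hlex' this
end

section
/- The LF mapping defined by LF(i) = C[c] + rank_c(BWT, i), where c = BWT[i], C[c] is the number of characters in T smaller than c, and rank_c(BWT,i) is the number of occurrences of c in BWT[1..i], satisfies SA[LF(i)] = SA[i] - 1 whenever SA[i] > 1 (and SA[LF(i)] = n when SA[i] = 1). -/
section Aux

variable {n : ℕ}

lemma sufList_eq_cons_s3 (T : Fin (n+1) → ℕ) (x : Fin (n+1)) :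
    sufList T x = T x :: (List.ofFn T).drop (x.val + 1) := by
  have hx : (x : ℕ) < (List.ofFn T).length := by simp [x.isLt]
  rw [sufList, List.drop_eq_getElem_cons hx, List.getElem_ofFn]

lemma lex_head_le {a b : ℕ} {l1 l2 : List ℕ}
    (h : List.Lex (· < ·) (a :: l1) (b :: l2)) : a ≤ b := by
  cases h with
  | cons _ => exact le_rfl
  | rel h => exact le_of_lt h

lemma head_mono (T : Fin (n+1) → ℕ) (SA : Equiv.Perm (Fin (n+1))) (hSA : IsSA T SA)
    {k l : Fin (n+1)} (h : k ≤ l) : T (SA k) ≤ T (SA l) := by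
  rcases eq_or_lt_of_le h with rfl | h
  · exact le_rfl
  · have hx := hSA k l h
    rw [sufList_eq_cons_s3, sufList_eq_cons_s3] at hx
    exact lex_head_le hx

lemma lex_lt (T : Fin (n+1) → ℕ) (SA : Equiv.Perm (Fin (n+1))) (hSA : IsSA T SA)
    {k l : Fin (n+1)}
    (h : List.Lex (· < ·) (sufList T (SA k)) (sufList T (SA l))) : k < l := by
  rcases lt_trichotomy k l with h' | rfl | h'
  · exact h'
  · exact absurd h (asymm h)
  · exact absurd h (asymm (hSA l k h'))

lemma term_eq (T : Fin (n+1) → ℕ) (hT : Terminator T) {x : Fin (n+1)}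
    (h : T x = T (Fin.last n)) : x = Fin.last n := by
  by_contra hx
  have := hT x hx
  omega

lemma bwt_term (T : Fin (n+1) → ℕ) (SA : Equiv.Perm (Fin (n+1))) (hT : Terminator T)
    {m : Fin (n+1)} (h : bwt T SA m = T (Fin.last n)) : SA m = 0 := by
  have h1 : SA m - 1 = Fin.last n := term_eq T hT h
  have : SA m - 1 + 1 = Fin.last n + 1 := by rw [h1]
  rwa [sub_add_cancel, Fin.last_add_one] at this

lemma sufList_sub_one (T : Fin (n+1) → ℕ) {x : Fin (n+1)} (hx : x ≠ 0) :
    sufList T (x - 1) = T (x - 1) :: sufList T x := by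
  rw [sufList_eq_cons_s3]
  have hv : ((x - 1 : Fin (n+1)) : ℕ) + 1 = (x : ℕ) := by
    rw [Fin.coe_sub_one, if_neg hx]
    have : (x : ℕ) ≠ 0 := fun h => hx (Fin.ext h)
    omega
  rw [hv]
  rfl

lemma lf_strictMono (T : Fin (n+1) → ℕ) (SA : Equiv.Perm (Fin (n+1)))
    (hSA : IsSA T SA) (hT : Terminator T) {m i : Fin (n+1)}
    (hb : bwt T SA m = bwt T SA i) (h : m < i) : lf SA m < lf SA i := by
  have hm0 : SA m ≠ 0 := by
    intro h0
    have hlast : bwt T SA m = T (Fin.last n) := by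
      unfold bwt
      rw [h0]
      congr 1
      have : (Fin.last n : Fin (n+1)) + 1 = 0 := Fin.last_add_one n
      rw [← this, add_sub_cancel_right]
    have hi0 : SA i = 0 := bwt_term T SA hT (hb ▸ hlast)
    have : m = i := SA.injective (by rw [h0, hi0])
    omega
  have hi0 : SA i ≠ 0 := by
    intro h0
    have hlast : bwt T SA i = T (Fin.last n) := by
      unfold bwt
      rw [h0]
      congr 1
      have : (Fin.last n : Fin (n+1)) + 1 = 0 := Fin.last_add_one n
      rw [← this, add_sub_cancel_right]
    have hm0' : SA m = 0 := bwt_term T SA hT (hb.trans hlast)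
    exact hm0 hm0'
  have hlex : List.Lex (· < ·) (sufList T (SA m - 1)) (sufList T (SA i - 1)) := by
    rw [sufList_sub_one T hm0, sufList_sub_one T hi0]
    have hh : T (SA m - 1) = T (SA i - 1) := hb
    rw [hh]
    exact List.Lex.cons (hSA m i h)
  have hlex' : List.Lex (· < ·) (sufList T (SA (lf SA m))) (sufList T (SA (lf SA i))) := by
    unfold lf
    rwa [SA.apply_symm_apply, SA.apply_symm_apply]
  exact lex_lt T SA hSA hlex'

lemma lf_mono (T : Fin (n+1) → ℕ) (SA : Equiv.Perm (Fin (n+1)))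
    (hSA : IsSA T SA) (hT : Terminator T) {m i : Fin (n+1)}
    (hb : bwt T SA m = bwt T SA i) (h : m ≤ i) : lf SA m ≤ lf SA i := by
  rcases eq_or_lt_of_le h with rfl | h
  · exact le_rfl
  · exact le_of_lt (lf_strictMono T SA hSA hT hb h)

lemma lf_mono_rev (T : Fin (n+1) → ℕ) (SA : Equiv.Perm (Fin (n+1)))
    (hSA : IsSA T SA) (hT : Terminator T) {m i : Fin (n+1)}
    (hb : bwt T SA m = bwt T SA i) (h : lf SA m ≤ lf SA i) : m ≤ i := by
  by_contra hmi
  push_neg at hmi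
  have := lf_strictMono T SA hSA hT hb.symm hmi
  omega

end Aux

/-- with LF(i) = C[c] + rank_c(BWT,i) (0-based: minus 1), we have
SA[LF(i)] = SA[i] − 1, circularly (Fin subtraction covers the case SA[i] = 1 ↦ n). -/
theorem lf_formula_correct {n : ℕ} (T : Fin (n+1) → ℕ) (SA : Equiv.Perm (Fin (n+1)))
    (hSA : IsSA T SA) (hT : Terminator T) :
    ∀ i : Fin (n+1), ∃ h : lfCount T SA i < n + 1, SA ⟨lfCount T SA i, h⟩ = SA i - 1 := by
  intro i
  set c := bwt T SA i with hc
  set j := lf SA i with hj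
  have hSAj : SA j = SA i - 1 := SA.apply_symm_apply _
  have hTj : T (SA j) = c := by rw [hSAj]; rfl
  -- the three finsets
  set A : Finset (Fin (n+1)) := Finset.univ.filter (fun k => T (SA k) < c) with hA
  set B : Finset (Fin (n+1)) := Finset.univ.filter (fun k => T (SA k) = c ∧ k ≤ j) with hB
  have hsplit : Finset.Iic j = A ∪ B := by
    ext k
    simp only [Finset.mem_Iic, hA, hB, Finset.mem_union, Finset.mem_filter, Finset.mem_univ,
      true_and]
    constructor
    · intro hk
      have := head_mono T SA hSA hk
      rw [hTj] at this
      rcases lt_or_eq_of_le this with h' | h'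
      · exact Or.inl h'
      · exact Or.inr ⟨h', hk⟩
    · rintro (h' | ⟨_, h'⟩)
      · by_contra hk
        push_neg at hk
        have := head_mono T SA hSA (le_of_lt hk)
        rw [hTj] at this
        omega
      · exact h'
  have hdisj : Disjoint A B := by
    rw [Finset.disjoint_left]
    intro k hkA hkB
    simp only [hA, hB, Finset.mem_filter] at hkA hkB
    omega
  have hcardA : A.card = cnt T c := by
    unfold cnt
    apply Finset.card_bij' (fun k _ => SA k) (fun k _ => SA.symm k)
    · intro k hk
      simp only [hA, Finset.mem_filter, Finset.mem_univ, true_and] at hk ⊢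
      exact hk
    · intro k hk
      simp only [hA, Finset.mem_filter, Finset.mem_univ, true_and,
        SA.apply_symm_apply] at hk ⊢
      exact hk
    · intro k _; exact SA.symm_apply_apply k
    · intro k _; exact SA.apply_symm_apply k
  have hcardB : B.card = rankIncl (bwt T SA) c i := by
    unfold rankIncl
    symm
    apply Finset.card_bij' (fun m _ => lf SA m) (fun k _ => SA.symm (SA k + 1))
    · intro m hm
      simp only [Finset.mem_filter, Finset.mem_univ, true_and] at hm
      simp only [hB, Finset.mem_filter, Finset.mem_univ, true_and]
      constructor
      · show T (SA (lf SA m)) = c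
        unfold lf
        rw [SA.apply_symm_apply]
        exact hm.2
      · exact lf_mono T SA hSA hT (hm.2.trans hc) hm.1
    · intro k hk
      simp only [hB, Finset.mem_filter, Finset.mem_univ, true_and] at hk
      simp only [Finset.mem_filter, Finset.mem_univ, true_and]
      have hbm : bwt T SA (SA.symm (SA k + 1)) = c := by
        unfold bwt
        rw [SA.apply_symm_apply, add_sub_cancel_right]
        exact hk.1
      constructor
      · apply lf_mono_rev T SA hSA hT (hbm.trans hc)
        have : lf SA (SA.symm (SA k + 1)) = k := by
          unfold lf
          rw [SA.apply_symm_apply, add_sub_cancel_right, SA.symm_apply_apply]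
        rw [this]
        exact hk.2
      · exact hbm
    · intro m _
      unfold lf
      rw [SA.apply_symm_apply, sub_add_cancel, SA.symm_apply_apply]
    · intro k _
      unfold lf
      rw [SA.apply_symm_apply, add_sub_cancel_right, SA.symm_apply_apply]
  have hcard : (j : ℕ) + 1 = cnt T c + rankIncl (bwt T SA) c i := by
    rw [← Fin.card_Iic j, hsplit, Finset.card_union_of_disjoint hdisj, hcardA, hcardB]
  have hcount : lfCount T SA i = (j : ℕ) := by
    unfold lfCount
    rw [← hc, ← hcard]
    omega
  refine ⟨by rw [hcount]; exact j.isLt, ?_⟩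
  have : (⟨lfCount T SA i, by rw [hcount]; exact j.isLt⟩ : Fin (n+1)) = j :=
    Fin.ext hcount
  rw [this, hSAj]
end

section
/- (Lemma: subsample size bound) Consider a finite set of r sample positions u_1 < u_2 < ... < u_r in [1..n]. Process i = 2, ..., r−1 in order, removing u_i if the nearest remaining sample to its left, say t, and u_{i+1} satisfy u_{i+1} − t ≤ s. Then the number x of remaining samples satisfies x ≤ min(r, 2⌈n/(s+1)⌉). -/
/-- One step of the sequential subsampling: when processing candidate `u (k+1)`,
remove it iff the next original sample `u (k+2)` and the nearest remaining sample
to the left of `u (k+1)` are at distance ≤ s. -/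
def subsampleStep (s : ℕ) (u : ℕ → ℕ) (k : ℕ) (S : Finset ℕ) : Finset ℕ :=
  if u (k+2) - ((S.filter fun x => x < u (k+1)).max.getD 0) ≤ s
  then S.erase (u (k+1)) else S

/-- State after processing the first `k` candidates (candidates are u 1, u 2, …, in order). -/
def subsampleIter (s : ℕ) (u : ℕ → ℕ) (r : ℕ) : ℕ → Finset ℕ
  | 0 => (Finset.range r).image u
  | k+1 => subsampleStep s u k (subsampleIter s u r k)

/-- Remaining samples after the whole sequential subsampling process
(processing u 1, …, u (r−2), i.e. the 1-based samples u_2, …, u_{r−1}). -/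
def subsample (s : ℕ) (u : ℕ → ℕ) (r : ℕ) : Finset ℕ :=
  subsampleIter s u r (r - 2)

lemma subsampleIter_subset_init (s : ℕ) (u : ℕ → ℕ) (r k : ℕ) :
    subsampleIter s u r k ⊆ (Finset.range r).image u := by
  induction k with
  | zero => exact Finset.Subset.refl _
  | succ k ih =>
    rw [subsampleIter, subsampleStep]
    split
    · exact (Finset.erase_subset _ _).trans ih
    · exact ih

lemma subsampleIter_anti (s : ℕ) (u : ℕ → ℕ) (r : ℕ) {k j : ℕ} (h : k ≤ j) :
    subsampleIter s u r j ⊆ subsampleIter s u r k := by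
  induction j with
  | zero =>
    have : k = 0 := by omega
    subst this; exact Finset.Subset.refl _
  | succ j ih =>
    rcases Nat.lt_or_ge k (j+1) with h' | h'
    · refine Finset.Subset.trans ?_ (ih (by omega))
      rw [subsampleIter, subsampleStep]
      split
      · exact Finset.erase_subset _ _
      · exact Finset.Subset.refl _
    · have : k = j + 1 := by omega
      subst this; exact Finset.Subset.refl _

/-- Window property: no three remaining samples `t < m < v` with `v - t ≤ s`. -/
lemma subsample_window (r s : ℕ) (u : ℕ → ℕ) (hmono : StrictMonoOn u (Set.Iio r))
    {t m v : ℕ} (ht : t ∈ subsample s u r) (hm : m ∈ subsample s u r)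
    (hv : v ∈ subsample s u r) (htm : t < m) (hmv : m < v) : s < v - t := by
  obtain ⟨i, hi, hui⟩ := Finset.mem_image.1 (subsampleIter_subset_init s u r _ hm)
  obtain ⟨j, hj, huj⟩ := Finset.mem_image.1 (subsampleIter_subset_init s u r _ ht)
  obtain ⟨l, hl, hul⟩ := Finset.mem_image.1 (subsampleIter_subset_init s u r _ hv)
  rw [Finset.mem_range] at hi hj hl
  have hji : j < i := by
    by_contra h
    have := hmono.monotoneOn (Set.mem_Iio.2 hi) (Set.mem_Iio.2 hj) (le_of_not_gt h)
    omega
  have hil : i < l := by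
    by_contra h
    have := hmono.monotoneOn (Set.mem_Iio.2 hl) (Set.mem_Iio.2 hi) (le_of_not_gt h)
    omega
  set k := i - 1 with hkdef
  have hk : k + 1 = i := by omega
  have hkr : k + 1 ≤ r - 2 := by omega
  have hmem : m ∈ subsampleIter s u r (k+1) := subsampleIter_anti s u r hkr hm
  have htmem : t ∈ subsampleIter s u r k :=
    subsampleIter_anti s u r (by omega : k ≤ r - 2) ht
  have hfilter : t ∈ (subsampleIter s u r k).filter (fun x => x < u (k+1)) := by
    rw [Finset.mem_filter, hk]
    exact ⟨htmem, hui ▸ htm⟩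
  obtain ⟨b, hb⟩ := Finset.max_of_mem hfilter
  have htb : t ≤ b := Finset.le_max_of_eq hfilter hb
  have hbmem := Finset.mem_of_max hb
  rw [Finset.mem_filter, hk] at hbmem
  rw [subsampleIter, subsampleStep] at hmem
  split_ifs at hmem with hcond
  · exact absurd rfl (hk ▸ hui ▸ Finset.ne_of_mem_erase hmem)
  · have hgd : ((subsampleIter s u r k).filter (fun x => x < u (k+1))).max.getD 0 = b := by
      rw [hb]; rfl
    rw [hgd] at hcond
    push_neg at hcond
    -- hcond : s < u (k+2) - b
    have hvl : u (k+2) ≤ v := by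
      rcases Nat.eq_or_lt_of_le (show k + 2 ≤ l by omega) with h' | h'
      · rw [h', hul]
      · exact hul ▸ le_of_lt (hmono (Set.mem_Iio.2 (by omega)) (Set.mem_Iio.2 hl) h')
    omega

lemma exists_sorted_triple {S : Finset ℕ} (h : 2 < S.card) :
    ∃ t m v, t ∈ S ∧ m ∈ S ∧ v ∈ S ∧ t < m ∧ m < v := by
  obtain ⟨a, b, c, ha, hb, hc, hab, hac, hbc⟩ := Finset.two_lt_card_iff.1 h
  rcases Nat.lt_trichotomy a b with h1 | h1 | h1
  · rcases Nat.lt_trichotomy b c with h2 | h2 | h2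
    · exact ⟨a, b, c, ha, hb, hc, h1, h2⟩
    · omega
    · rcases Nat.lt_trichotomy a c with h3 | h3 | h3
      · exact ⟨a, c, b, ha, hc, hb, h3, h2⟩
      · omega
      · exact ⟨c, a, b, hc, ha, hb, h3, h1⟩
  · omega
  · rcases Nat.lt_trichotomy a c with h2 | h2 | h2
    · exact ⟨b, a, c, hb, ha, hc, h1, h2⟩
    · omega
    · rcases Nat.lt_trichotomy b c with h3 | h3 | h3
      · exact ⟨b, c, a, hb, hc, ha, h3, h2⟩
      · omega
      · exact ⟨c, b, a, hc, hb, ha, h3, h1⟩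

lemma same_bin_close {s x y : ℕ} (hx : 1 ≤ x) (hxy : x ≤ y)
    (h : (x - 1) / (s + 1) = (y - 1) / (s + 1)) : y - x ≤ s := by
  have h1 := Nat.div_add_mod (x - 1) (s + 1)
  have h2 := Nat.div_add_mod (y - 1) (s + 1)
  have h3 : (x - 1) % (s + 1) < s + 1 := Nat.mod_lt _ (by omega)
  have h4 : (y - 1) % (s + 1) < s + 1 := Nat.mod_lt _ (by omega)
  rw [h] at h1
  omega

/-- the number x of remaining samples satisfies x ≤ min(r, 2⌈n/(s+1)⌉). -/
theorem subsample_card_bound (n r s : ℕ) (u : ℕ → ℕ)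
    (hs : 1 ≤ s) (hmono : StrictMonoOn u (Set.Iio r))
    (hbounds : ∀ i < r, 1 ≤ u i ∧ u i ≤ n) :
    (subsample s u r).card ≤ min r (2 * ((n + s) / (s + 1))) := by
  refine le_min ?_ ?_
  · calc (subsample s u r).card
        ≤ ((Finset.range r).image u).card :=
          Finset.card_le_card (subsampleIter_subset_init s u r _)
      _ ≤ (Finset.range r).card := Finset.card_image_le
      _ = r := Finset.card_range r
  · set S := subsample s u r with hS
    have hSn : ∀ x ∈ S, 1 ≤ x ∧ x ≤ n := by
      intro x hx
      obtain ⟨i, hi, hui⟩ := Finset.mem_image.1 (subsampleIter_subset_init s u r _ hx)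
      rw [Finset.mem_range] at hi
      exact hui ▸ hbounds i hi
    have key : S.card ≤ 2 * (S.image (fun x => (x - 1) / (s + 1))).card := by
      apply Finset.card_le_mul_card_image
      intro a _
      by_contra hcon
      push_neg at hcon
      obtain ⟨t, m, v, ht, hm, hv, htm, hmv⟩ := exists_sorted_triple hcon
      rw [Finset.mem_filter] at ht hm hv
      have hwin := subsample_window r s u hmono ht.1 hm.1 hv.1 htm hmv
      have hclose : v - t ≤ s :=
        same_bin_close (hSn t ht.1).1 (by omega) (ht.2.trans hv.2.symm)
      omega
    have himg : S.image (fun x => (x - 1) / (s + 1)) ⊆ Finset.range ((n + s) / (s + 1)) := by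
      intro a ha
      obtain ⟨x, hx, hxa⟩ := Finset.mem_image.1 ha
      obtain ⟨hx1, hxn⟩ := hSn x hx
      rw [Finset.mem_range, ← hxa]
      have h1 : (x - 1) / (s + 1) ≤ (n - 1) / (s + 1) :=
        Nat.div_le_div_right (by omega)
      have h2 : (n - 1 + (s + 1)) / (s + 1) = (n - 1) / (s + 1) + 1 :=
        Nat.add_div_right _ (by omega)
      have h3 : n - 1 + (s + 1) = n + s := by omega
      rw [h3] at h2
      omega
    calc S.card ≤ 2 * (S.image (fun x => (x - 1) / (s + 1))).card := key
      _ ≤ 2 * ((n + s) / (s + 1)) := by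
          have := Finset.card_le_card himg
          rw [Finset.card_range] at this
          omega
end

section
/- (Key property of subsampling) After the sequential subsampling process, any three consecutive remaining samples t_{i−1} < t_i < t_{i+1} satisfy t_{i+1} − t_{i−1} > s. Equivalently, any interval of s+1 consecutive integers contains at most 2 remaining samples. -/
/-!
A candidate `u (k+1)` survives only if the next original sample `u (k+2)` lies more than `s`
beyond the nearest survivor `t` to its left. Everything still present to its left is `≤ t`,
everything to its right is `≥ u (k+2)`, and later removals only shrink the set, so every
survivor `b` with survivors on both sides has them more than `s` apart. A window of length `s`
containing three survivors would violate this around its middle one.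
-/

open Finset

def SpreadAround (s : ℕ) (S : Finset ℕ) (b : ℕ) : Prop :=
  ∀ x ∈ S, x < b → ∀ y ∈ S, b < y → s < y - x

lemma SpreadAround.mono {s b : ℕ} {S T : Finset ℕ} (hST : T ⊆ S) (h : SpreadAround s S b) :
    SpreadAround s T b :=
  fun x hx hxb y hy hby => h x (hST hx) hxb y (hST hy) hby

lemma Finset.le_max_getD {α : Type*} [LinearOrder α] {S : Finset α} {x : α} (hx : x ∈ S)
    (d : α) : x ≤ S.max.getD d := by
  obtain ⟨m, hm⟩ := Finset.max_of_mem hx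
  have hxm := Finset.le_max hx
  rw [hm] at hxm ⊢
  exact WithBot.coe_le_coe.mp hxm

lemma StrictMonoOn.le_apply_succ_of_lt {r i l : ℕ} {u : ℕ → ℕ} (hu : StrictMonoOn u (Set.Iio r))
    (hi : i + 1 < r) (hl : l < r) (hlt : u i < u l) : u (i + 1) ≤ u l := by
  have hil : i < l := (hu.lt_iff_lt (by simp only [Set.mem_Iio]; omega) hl).mp hlt
  exact (hu.le_iff_le hi hl).mpr hil

section Subsample

variable {s r : ℕ} {u : ℕ → ℕ}

lemma subsampleStep_subset (k : ℕ) (S : Finset ℕ) : subsampleStep s u k S ⊆ S := by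
  unfold subsampleStep
  split
  · exact erase_subset _ _
  · exact Subset.rfl

lemma subsampleIter_subset_image (k : ℕ) : subsampleIter s u r k ⊆ (range r).image u := by
  induction k with
  | zero => exact Subset.rfl
  | succ k ih => exact (subsampleStep_subset k _).trans ih

lemma exists_index_of_mem_subsampleIter {k x : ℕ} (hx : x ∈ subsampleIter s u r k) :
    ∃ i < r, u i = x := by
  simpa using subsampleIter_subset_image k hx

lemma spreadAround_of_mem_subsampleStep (hu : StrictMonoOn u (Set.Iio r)) {k : ℕ}
    (hk : k + 2 < r) {S : Finset ℕ} (hS : S ⊆ (range r).image u)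
    (hmem : u (k + 1) ∈ subsampleStep s u k S) : SpreadAround s S (u (k + 1)) := by
  intro x hx hxb y hy hby
  have hkept : s < u (k + 2) - (S.filter fun z => z < u (k + 1)).max.getD 0 := by
    by_contra! hdrop
    rw [subsampleStep, if_pos hdrop] at hmem
    exact notMem_erase _ _ hmem
  have hxt : x ≤ (S.filter fun z => z < u (k + 1)).max.getD 0 :=
    Finset.le_max_getD (mem_filter.mpr ⟨hx, hxb⟩) 0
  obtain ⟨l, hl, rfl⟩ : ∃ l < r, u l = y := by simpa using hS hy
  have hyl : u (k + 2) ≤ u l := hu.le_apply_succ_of_lt hk hl hby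
  omega

lemma spreadAround_subsampleIter (hu : StrictMonoOn u (Set.Iio r)) :
    ∀ k ≤ r - 2, ∀ j, 1 ≤ j → j ≤ k → u j ∈ subsampleIter s u r k →
      SpreadAround s (subsampleIter s u r k) (u j) := by
  intro k
  induction k with
  | zero => intro _ j hj hjk; omega
  | succ k ih =>
    intro hk j hj hjk hmem
    have hsub : subsampleIter s u r (k + 1) ⊆ subsampleIter s u r k := subsampleStep_subset k _
    refine SpreadAround.mono hsub ?_
    rcases Nat.lt_or_ge j (k + 1) with hlt | hge
    · exact ih (by omega) j hj (by omega) (hsub hmem)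
    · obtain rfl : j = k + 1 := by omega
      exact spreadAround_of_mem_subsampleStep hu (by omega) (subsampleIter_subset_image k) hmem

theorem subsample_spread_of_lt_of_lt (hu : StrictMonoOn u (Set.Iio r)) {a b c : ℕ}
    (ha : a ∈ subsample s u r) (hb : b ∈ subsample s u r) (hc : c ∈ subsample s u r)
    (hab : a < b) (hbc : b < c) : s < c - a := by
  obtain ⟨i, hi, rfl⟩ := exists_index_of_mem_subsampleIter ha
  obtain ⟨j, hj, rfl⟩ := exists_index_of_mem_subsampleIter hb
  obtain ⟨l, hl, rfl⟩ := exists_index_of_mem_subsampleIter hc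
  have hij : i < j := (hu.lt_iff_lt hi hj).mp hab
  have hjl : j < l := (hu.lt_iff_lt hj hl).mp hbc
  exact spreadAround_subsampleIter hu (r - 2) le_rfl j (by omega) (by omega) hb
    _ ha hab _ hc hbc

end Subsample

lemma Finset.card_filter_window_le_two {S : Finset ℕ} {s : ℕ}
    (hS : ∀ a b c, a ∈ S → b ∈ S → c ∈ S → a < b → b < c → s < c - a) (a : ℕ) :
    (S.filter fun x => a ≤ x ∧ x ≤ a + s).card ≤ 2 := by
  set F := S.filter fun x => a ≤ x ∧ x ≤ a + s
  rcases F.eq_empty_or_nonempty with hF | hF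
  · simp [hF]
  have hsub : F ⊆ {F.min' hF, F.max' hF} := by
    intro y hy
    have hmin := F.min'_le y hy
    have hmax := F.le_max' y hy
    by_contra! hne
    simp only [mem_insert, mem_singleton, not_or] at hne
    have hlo := (mem_filter.mp (F.min'_mem hF)).2
    have hhi := (mem_filter.mp (F.max'_mem hF)).2
    have := hS _ y _ (mem_filter.mp (F.min'_mem hF)).1 (mem_filter.mp hy).1
      (mem_filter.mp (F.max'_mem hF)).1 (by omega) (by omega)
    omega
  exact (card_le_card hsub).trans card_le_two

theorem subsample_spread_general (r s : ℕ) (u : ℕ → ℕ)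
    (hmono : StrictMonoOn u (Set.Iio r)) :
    (∀ a b c : ℕ, a ∈ subsample s u r → b ∈ subsample s u r → c ∈ subsample s u r →
      a < b → b < c → s < c - a) ∧
    (∀ a : ℕ, ((subsample s u r).filter fun x => a ≤ x ∧ x ≤ a + s).card ≤ 2) := by
  have hspread : ∀ a b c : ℕ, a ∈ subsample s u r → b ∈ subsample s u r →
      c ∈ subsample s u r → a < b → b < c → s < c - a :=
    fun _ _ _ => subsample_spread_of_lt_of_lt hmono
  exact ⟨hspread, Finset.card_filter_window_le_two hspread⟩

/-- any three remaining samples a < b < c satisfy c − a > s; equivalently,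
any window of s+1 consecutive integers contains at most 2 remaining samples. -/
theorem subsample_spread (n r s : ℕ) (u : ℕ → ℕ)
    (hs : 1 ≤ s) (hmono : StrictMonoOn u (Set.Iio r))
    (hbounds : ∀ i < r, 1 ≤ u i ∧ u i ≤ n) :
    (∀ a b c : ℕ, a ∈ subsample s u r → b ∈ subsample s u r → c ∈ subsample s u r →
      a < b → b < c → s < c - a) ∧
    (∀ a : ℕ, ((subsample s u r).filter fun x => a ≤ x ∧ x ≤ a + s).card ≤ 2) :=
  subsample_spread_general r s u hmono
end

section
/- (Lemma distance-s) In the sequential subsampling process, if some original sample u_j was removed and t_i < u_j < t_{i+1} where t_i and t_{i+1} are the remaining samples immediately surrounding u_j, then t_{i+1} − t_i ≤ s. -/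
namespace SubsampleAux

lemma step_subset (s : ℕ) (u : ℕ → ℕ) (k : ℕ) (S : Finset ℕ) :
    subsampleStep s u k S ⊆ S := by
  unfold subsampleStep
  split
  · exact Finset.erase_subset _ _
  · exact subset_rfl

lemma iter_subset (s : ℕ) (u : ℕ → ℕ) (r : ℕ) {k l : ℕ} (h : k ≤ l) :
    subsampleIter s u r l ⊆ subsampleIter s u r k := by
  induction l with
  | zero => simp only [Nat.le_zero] at h; subst h; exact subset_rfl
  | succ l ih =>
    rcases Nat.eq_or_lt_of_le h with rfl | h'
    · exact subset_rfl
    · exact (step_subset s u l _).trans (ih (Nat.lt_succ_iff.mp h'))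

lemma iter_subset_image (s : ℕ) (u : ℕ → ℕ) (r k : ℕ) :
    subsampleIter s u r k ⊆ (Finset.range r).image u :=
  iter_subset s u r (Nat.zero_le k)

/-- Elements with index `> k` (or index 0) are still present after `k` steps. -/
lemma mem_iter (s : ℕ) (u : ℕ → ℕ) (r : ℕ) (hmono : StrictMonoOn u (Set.Iio r))
    {p k : ℕ} (hp : p < r) (hk : k + 1 < r) (hpk : k < p ∨ p = 0) :
    u p ∈ subsampleIter s u r k := by
  induction k with
  | zero => exact Finset.mem_image_of_mem u (Finset.mem_range.mpr hp)
  | succ k ih =>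
    have hk1 : k + 1 < r := by omega
    have ihm : u p ∈ subsampleIter s u r k := ih hk1 (by omega)
    have hne : u p ≠ u (k + 1) := by
      intro h
      have := hmono.injOn (Set.mem_Iio.mpr hp)
        (Set.mem_Iio.mpr (show k + 1 < r by omega)) h
      omega
    show u p ∈ subsampleStep s u k _
    unfold subsampleStep
    split
    · exact Finset.mem_erase.mpr ⟨hne, ihm⟩
    · exact ihm

/-- An element of index `≤ k` that is present after `k` steps stays forever. -/
lemma surv (s : ℕ) (u : ℕ → ℕ) (r : ℕ) (hmono : StrictMonoOn u (Set.Iio r))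
    {p k l : ℕ} (hp : p < r) (hpk : p ≤ k) (hkl : k ≤ l) (hl : l ≤ r - 2)
    (hmem : u p ∈ subsampleIter s u r k) : u p ∈ subsampleIter s u r l := by
  induction l, hkl using Nat.le_induction with
  | base => exact hmem
  | succ l hkl ih =>
    have hl' : l + 1 < r := by omega
    have ihm : u p ∈ subsampleIter s u r l := ih (by omega)
    have hne : u p ≠ u (l + 1) := by
      intro h
      have := hmono.injOn (Set.mem_Iio.mpr hp) (Set.mem_Iio.mpr hl') h
      omega
    show u p ∈ subsampleStep s u l _
    unfold subsampleStep
    split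
    · exact Finset.mem_erase.mpr ⟨hne, ihm⟩
    · exact ihm

/-- If `u p` got removed, it was removed at step `p - 1`, and the distance
condition held then. -/
lemma removal_spec (s : ℕ) (u : ℕ → ℕ) (r : ℕ) (hmono : StrictMonoOn u (Set.Iio r))
    {p : ℕ} (hp : p < r) (hrem : u p ∉ subsample s u r) :
    1 ≤ p ∧ p ≤ r - 2 ∧
      u (p + 1) -
        (((subsampleIter s u r (p - 1)).filter fun x => x < u p).max.getD 0) ≤ s := by
  classical
  have h0 : u p ∈ subsampleIter s u r 0 :=
    Finset.mem_image_of_mem u (Finset.mem_range.mpr hp)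
  have hex : ∃ k, u p ∉ subsampleIter s u r k := ⟨r - 2, hrem⟩
  have hkspec : u p ∉ subsampleIter s u r (Nat.find hex) := Nat.find_spec hex
  have hkle : Nat.find hex ≤ r - 2 := Nat.find_min' hex hrem
  have hk0 : Nat.find hex ≠ 0 := by
    intro h; rw [h] at hkspec; exact hkspec h0
  obtain ⟨k', hk'⟩ : ∃ k', Nat.find hex = k' + 1 := ⟨Nat.find hex - 1, by omega⟩
  rw [hk'] at hkspec hkle
  have hin : u p ∈ subsampleIter s u r k' := by
    by_contra h
    have := Nat.find_min' hex h
    omega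
  have hout : u p ∉ subsampleStep s u k' (subsampleIter s u r k') := hkspec
  unfold subsampleStep at hout
  split at hout
  · rename_i hcond
    have heq : u p = u (k' + 1) := by
      by_contra hne
      exact hout (Finset.mem_erase.mpr ⟨hne, hin⟩)
    have hk'r : k' + 1 < r := by omega
    have hpk : p = k' + 1 :=
      hmono.injOn (Set.mem_Iio.mpr hp) (Set.mem_Iio.mpr hk'r) heq
    subst hpk
    refine ⟨by omega, by omega, ?_⟩
    simpa using hcond
  · exact absurd hin hout

/-- Characterization of the "nearest remaining left neighbour" used in a step. -/
lemma max_spec (s : ℕ) (u : ℕ → ℕ) (r : ℕ) (hmono : StrictMonoOn u (Set.Iio r))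
    {p : ℕ} (hp1 : 1 ≤ p) (hp2 : p ≤ r - 2) :
    ∃ M, (((subsampleIter s u r (p - 1)).filter fun x => x < u p).max.getD 0) = M ∧
      M ∈ subsample s u r ∧ M < u p ∧
      ∀ x ∈ subsampleIter s u r (p - 1), x < u p → x ≤ M := by
  classical
  have hr : 3 ≤ r := by omega
  have hpr : p < r := by omega
  have h0mem : u 0 ∈ subsampleIter s u r (p - 1) :=
    mem_iter s u r hmono (by omega) (by omega) (Or.inr rfl)
  have h0lt : u 0 < u p :=
    hmono (Set.mem_Iio.mpr (by omega)) (Set.mem_Iio.mpr hpr) (by omega)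
  set F := (subsampleIter s u r (p - 1)).filter fun x => x < u p with hF
  have hFne : F.Nonempty := ⟨u 0, Finset.mem_filter.mpr ⟨h0mem, h0lt⟩⟩
  obtain ⟨M, hM⟩ := Finset.max_of_nonempty hFne
  have hMmem : M ∈ F := Finset.mem_of_max hM
  obtain ⟨hMiter, hMlt⟩ := Finset.mem_filter.mp hMmem
  -- M = u q for some q < p
  obtain ⟨q, hq, hqM⟩ := Finset.mem_image.mp (iter_subset_image s u r (p - 1) hMiter)
  rw [Finset.mem_range] at hq
  have hqp : q < p := by
    by_contra h
    push_neg at h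
    rcases Nat.eq_or_lt_of_le h with rfl | h'
    · omega
    · have := hmono (Set.mem_Iio.mpr hpr) (Set.mem_Iio.mpr hq) h'
      omega
  have hMfinal : M ∈ subsample s u r := by
    rw [← hqM]
    exact surv s u r hmono hq (by omega) (by omega) le_rfl (hqM ▸ hMiter)
  refine ⟨M, ?_, hMfinal, hMlt, ?_⟩
  · rw [hM]; rfl
  · intro x hx hxlt
    have : (x : WithBot ℕ) ≤ F.max :=
      Finset.le_max (Finset.mem_filter.mpr ⟨hx, hxlt⟩)
    rw [hM] at this
    exact WithBot.coe_le_coe.mp this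

end SubsampleAux

/-- Lemma distance-s: if some original sample u j was removed and
a < u j < b are the remaining samples immediately surrounding it, then b − a ≤ s. -/
theorem subsample_distance_s (n r s : ℕ) (u : ℕ → ℕ)
    (hs : 1 ≤ s) (hmono : StrictMonoOn u (Set.Iio r))
    (hbounds : ∀ i < r, 1 ≤ u i ∧ u i ≤ n)
    (j : ℕ) (hj : j < r) (hrem : u j ∉ subsample s u r)
    (a b : ℕ) (ha : a ∈ subsample s u r) (hb : b ∈ subsample s u r)
    (hau : a < u j) (hub : u j < b)
    (hcons : ∀ x ∈ subsample s u r, x ≤ a ∨ b ≤ x) :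
    b - a ≤ s := by
  classical
  -- b is an original sample
  obtain ⟨m, hm, hmb⟩ := Finset.mem_image.mp (SubsampleAux.iter_subset_image s u r (r - 2) hb)
  rw [Finset.mem_range] at hm
  have hjm : j < m := by
    by_contra h
    push_neg at h
    rcases Nat.eq_or_lt_of_le h with rfl | h'
    · omega
    · have := hmono (Set.mem_Iio.mpr hm) (Set.mem_Iio.mpr hj) h'
      omega
  -- the sample just before b was removed
  set q := m - 1 with hq
  have hqm : q + 1 = m := by omega
  have hqr : q < r := by omega
  have hjq : j ≤ q := by omega
  have hujq : u j ≤ u q := by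
    rcases Nat.eq_or_lt_of_le hjq with rfl | h'
    · exact le_rfl
    · exact le_of_lt (hmono (Set.mem_Iio.mpr hj) (Set.mem_Iio.mpr hqr) h')
  have huqb : u q < b := by
    rw [← hmb]
    exact hmono (Set.mem_Iio.mpr hqr) (Set.mem_Iio.mpr hm) (by omega)
  have hqrem : u q ∉ subsample s u r := by
    rcases Nat.eq_or_lt_of_le hjq with rfl | h'
    · exact hrem
    · intro hmem
      rcases hcons _ hmem with h1 | h2
      · have : u j < u q := hmono (Set.mem_Iio.mpr hj) (Set.mem_Iio.mpr hqr) h'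
        omega
      · omega
  obtain ⟨hq1, hq2, hcond⟩ := SubsampleAux.removal_spec s u r hmono hqr hqrem
  obtain ⟨M, hMeq, hMfinal, hMlt, hMmax⟩ := SubsampleAux.max_spec s u r hmono hq1 hq2
  -- a = M
  have hMa : M ≤ a := by
    rcases hcons _ hMfinal with h1 | h2
    · exact h1
    · omega
  have haM : a ≤ M := by
    have haq : a ∈ subsampleIter s u r (q - 1) :=
      SubsampleAux.iter_subset s u r (by omega) ha
    exact hMmax a haq (by omega)
  have haMeq : a = M := le_antisymm haM hMa
  rw [hMeq] at hcond
  rw [← hmb, ← hqm, haMeq]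
  exact hcond
end

section
/- (Lemma sri-no-removed-samples) Fix the sequential subsampling with parameter s, and let P be a position. If no remaining sample lies in the interval [P − s, P − 1], then no original sample was removed between P − 1 and its preceding remaining sample. Precisely: if t_i < P − 1 < t_{i+1} are the surrounding remaining samples and t_i < P − s, then no original sample u_j with t_i < u_j < t_{i+1} was removed. -/
/-!
Every sample removed so far lies strictly between two remaining samples at distance at most `s`.
This invariant survives each step: the candidate `y` is removed only when its nearest remaining
left neighbour `m` and the next original sample are within `s` of each other, and an earlier
removed sample whose right witness was `y` is re-witnessed either by `m` and that next sample
or by its old left witness and `m`. For the final samples, a removed `u j` with `a < u j < b`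
would therefore force `b - a ≤ s`, contradicting `a + s < P ≤ b`.
-/

def Bridged (s : ℕ) (S : Finset ℕ) (x : ℕ) : Prop :=
  ∃ t₁ ∈ S, ∃ t₂ ∈ S, t₁ < x ∧ x < t₂ ∧ t₂ - t₁ ≤ s

lemma Bridged.erase {s : ℕ} {S : Finset ℕ} {x y m n : ℕ} (hx : Bridged s S x) (hxS : x ∉ S)
    (hxy : x ≤ y) (hm : m ∈ S) (hmy : m < y) (hgap : ∀ z ∈ S, z < y → z ≤ m)
    (hn : n ∈ S) (hyn : y < n) (hmn : n - m ≤ s) :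
    Bridged s (S.erase y) x := by
  obtain ⟨t₁, ht₁, t₂, ht₂, h₁x, hxt₂, hgap₁₂⟩ := hx
  have hm' : m ∈ S.erase y := Finset.mem_erase.mpr ⟨hmy.ne, hm⟩
  have ht₁' : t₁ ∈ S.erase y := Finset.mem_erase.mpr ⟨by omega, ht₁⟩
  by_cases ht₂y : t₂ = y
  · subst ht₂y
    have ht₁m : t₁ ≤ m := hgap t₁ ht₁ (by omega)
    rcases lt_or_gt_of_ne (show x ≠ m by rintro rfl; exact hxS hm) with hxm | hmx
    · exact ⟨t₁, ht₁', m, hm', h₁x, hxm, by omega⟩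
    · exact ⟨m, hm', n, Finset.mem_erase.mpr ⟨hyn.ne', hn⟩, hmx, by omega, hmn⟩
  · exact ⟨t₁, ht₁', t₂, Finset.mem_erase.mpr ⟨ht₂y, ht₂⟩, h₁x, hxt₂, hgap₁₂⟩

lemma exists_max_filter_lt {S : Finset ℕ} {y z : ℕ} (hz : z ∈ S) (hzy : z < y) :
    ∃ m ∈ S, m < y ∧ (∀ w ∈ S, w < y → w ≤ m) ∧ (S.filter (· < y)).max.getD 0 = m := by
  obtain ⟨m, hmax⟩ := (S.filter (· < y)).max_of_nonempty ⟨z, Finset.mem_filter.mpr ⟨hz, hzy⟩⟩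
  obtain ⟨hm, hmy⟩ := Finset.mem_filter.mp (Finset.mem_of_max hmax)
  refine ⟨m, hm, hmy, fun w hw hwy => ?_, by rw [hmax]; rfl⟩
  exact Finset.le_max_of_eq (Finset.mem_filter.mpr ⟨hw, hwy⟩) hmax

lemma mem_subsampleStep {s k z : ℕ} {u : ℕ → ℕ} {S : Finset ℕ} (hz : z ∈ S)
    (hzu : z ≠ u (k + 1)) : z ∈ subsampleStep s u k S := by
  unfold subsampleStep
  split_ifs
  exacts [Finset.mem_erase.mpr ⟨hzu, hz⟩, hz]

lemma bridged_subsampleStep {s k x z : ℕ} {u : ℕ → ℕ} {S : Finset ℕ}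
    (hz : z ∈ S) (hzy : z < u (k + 1)) (hnext : u (k + 2) ∈ S) (hynext : u (k + 1) < u (k + 2))
    (hx : x ∉ subsampleStep s u k S) (hxy : x ≤ u (k + 1)) (hbridged : x ∉ S → Bridged s S x) :
    Bridged s (subsampleStep s u k S) x := by
  obtain ⟨m, hm, hmy, hgap, hmax⟩ := exists_max_filter_lt hz hzy
  unfold subsampleStep at hx ⊢
  rw [hmax] at hx ⊢
  split_ifs at hx ⊢ with hcond
  · by_cases hxS : x ∈ S
    · obtain rfl : x = u (k + 1) := by
        by_contra hne
        exact hx (Finset.mem_erase.mpr ⟨hne, hxS⟩)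
      exact ⟨m, Finset.mem_erase.mpr ⟨hmy.ne, hm⟩,
        u (k + 2), Finset.mem_erase.mpr ⟨hynext.ne', hnext⟩, hmy, hynext, hcond⟩
    · exact (hbridged hxS).erase hxS hxy hm hmy hgap hnext hynext hcond
  · exact hbridged hx

section Iteration

variable {s r : ℕ} {u : ℕ → ℕ}

lemma mem_subsampleIter_of_unprocessed (hmono : StrictMonoOn u (Set.Iio r)) {k j : ℕ}
    (hk : k ≤ r - 2) (hj : j < r) (hj0 : j = 0 ∨ k < j) : u j ∈ subsampleIter s u r k := by
  induction k with
  | zero => exact Finset.mem_image_of_mem u (Finset.mem_range.mpr hj)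
  | succ k ih =>
    refine mem_subsampleStep (ih (by omega) (by omega)) fun h => ?_
    have hj' : j ≠ k + 1 := by omega
    exact hj' (hmono.injOn (Set.mem_Iio.mpr hj) (Set.mem_Iio.mpr (by omega)) h)

lemma bridged_of_not_mem_subsampleIter (hmono : StrictMonoOn u (Set.Iio r)) {k j : ℕ}
    (hk : k ≤ r - 2) (hj : j < r) (hrem : u j ∉ subsampleIter s u r k) :
    Bridged s (subsampleIter s u r k) (u j) := by
  induction k with
  | zero => exact absurd (Finset.mem_image_of_mem u (Finset.mem_range.mpr hj)) hrem
  | succ k ih =>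
    have hjk : 1 ≤ j ∧ j ≤ k + 1 := by
      by_contra! hout
      exact hrem (mem_subsampleIter_of_unprocessed hmono hk hj (by omega))
    have hu_lt {i i' : ℕ} (hii' : i < i') (hi' : i' < r) : u i < u i' :=
      hmono (Set.mem_Iio.mpr (hii'.trans hi')) (Set.mem_Iio.mpr hi') hii'
    have hu₀ : u 0 ∈ subsampleIter s u r k :=
      mem_subsampleIter_of_unprocessed hmono (by omega) (by omega) (Or.inl rfl)
    have hnext : u (k + 2) ∈ subsampleIter s u r k :=
      mem_subsampleIter_of_unprocessed hmono (by omega) (by omega) (by omega)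
    have hle : u j ≤ u (k + 1) := hmono.monotoneOn hj (by simp only [Set.mem_Iio]; omega) hjk.2
    exact bridged_subsampleStep hu₀ (hu_lt (by omega) (by omega)) hnext
      (hu_lt (by omega) (by omega)) hrem hle (ih (by omega))

end Iteration

theorem subsample_no_removed_general (r s : ℕ) (u : ℕ → ℕ)
    (hmono : StrictMonoOn u (Set.Iio r))
    (P : ℕ)
    (a b : ℕ)
    (hPb : P - 1 < b)
    (hcons : ∀ x ∈ subsample s u r, x ≤ a ∨ b ≤ x)
    (hfar : a + s < P) :
    ∀ j < r, a < u j → u j < b → u j ∈ subsample s u r := by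
  intro j hj hau hub
  by_contra hrem
  obtain ⟨t₁, ht₁, t₂, ht₂, h₁, h₂, h₁₂⟩ := bridged_of_not_mem_subsampleIter hmono le_rfl hj hrem
  have hc₁ := hcons t₁ ht₁
  have hc₂ := hcons t₂ ht₂
  omega

/-- Lemma sri-no-removed-samples: if a < P−1 < b are the remaining
samples surrounding position P−1 and a < P − s (no remaining sample in [P−s, P−1]),
then no original sample strictly between a and b was removed. -/
theorem subsample_no_removed (n r s : ℕ) (u : ℕ → ℕ)
    (hs : 1 ≤ s) (hmono : StrictMonoOn u (Set.Iio r))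
    (hbounds : ∀ i < r, 1 ≤ u i ∧ u i ≤ n)
    (P : ℕ) (hP : 1 ≤ P)
    (a b : ℕ) (ha : a ∈ subsample s u r) (hb : b ∈ subsample s u r)
    (haP : a < P - 1) (hPb : P - 1 < b)
    (hcons : ∀ x ∈ subsample s u r, x ≤ a ∨ b ≤ x)
    (hfar : a + s < P) :
    ∀ j < r, a < u j → u j < b → u j ∈ subsample s u r :=
  subsample_no_removed_general r s u hmono P a b hPb hcons hfar
end

section
/- (φ correctness) Let j be a SA position with SA[j] > 1 such that j−1 ≥ 1 and for all 0 ≤ p < k, positions LF^p(j) and LF^p(j−1) = LF^p(j) − 1 lie in the same BWT run, while LF^k(j) starts a BWT run (so LF^k(j)−1 = LF^k(j−1) ends the previous run). Then SA[j−1] = SA[LF^k(j−1)] + k and SA[j] = SA[LF^k(j)] + k; consequently SA[j−1] = SA[LF^k(j)−1] + (SA[j] − SA[LF^k(j)]). -/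
lemma sufList_cons {n : ℕ} (T : Fin (n+1) → ℕ) (x : Fin (n+1)) :
    sufList T x = T x :: (List.ofFn T).drop (x.val + 1) := by
  unfold sufList
  rw [List.drop_eq_getElem_cons (by simp [x.isLt])]
  simp only [List.getElem_ofFn, Fin.eta]


lemma lex_nil_false {x : List ℕ} (h : List.Lex (· < ·) x ([] : List ℕ)) : False := by
  cases h

lemma lex_cons_inv {c d : ℕ} {x y : List ℕ}
    (h : List.Lex (· < ·) (c :: x) (d :: y)) :
    c < d ∨ (c = d ∧ List.Lex (· < ·) x y) := by
  cases h with
  | rel h' => exact Or.inl h'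
  | cons h' => exact Or.inr ⟨rfl, h'⟩

lemma lt_iff_suf {n : ℕ} {T : Fin (n+1) → ℕ} {SA : Equiv.Perm (Fin (n+1))}
    (hSA : IsSA T SA) {a b : Fin (n+1)} :
    a < b ↔ List.Lex (· < ·) (sufList T (SA a)) (sufList T (SA b)) := by
  constructor
  · exact hSA a b
  · intro h
    by_contra hc
    push_neg at hc
    rcases lt_or_eq_of_le hc with h' | h'
    · exact absurd h (asymm_of (List.Lex (· < ·)) (hSA b a h'))
    · subst h'; exact irrefl_of (List.Lex (· < ·)) _ h

lemma SA_zero {n : ℕ} {T : Fin (n+1) → ℕ} {SA : Equiv.Perm (Fin (n+1))}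
    (hSA : IsSA T SA) (hT : Terminator T) : SA 0 = Fin.last n := by
  by_contra h
  set m := SA.symm (Fin.last n) with hmdef
  have hm : SA m = Fin.last n := SA.apply_symm_apply _
  have hm0 : m ≠ 0 := fun e => h (by rw [← hm, e])
  have hpos : (0 : Fin (n+1)) < m := Fin.pos_of_ne_zero hm0
  have hlex := hSA 0 m hpos
  rw [hm] at hlex
  have hlast : sufList T (Fin.last n) = [T (Fin.last n)] := by
    rw [sufList_cons]
    congr 1
    exact List.drop_eq_nil_of_le (by simp)
  rw [hlast, sufList_cons] at hlex
  have hne : SA 0 ≠ Fin.last n := by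
    intro e; exact hm0 (SA.injective (by rw [hm, e]))
  have := hT (SA 0) hne
  rcases lex_cons_inv hlex with h' | ⟨_, h'⟩
  · exact absurd this (lt_asymm h')
  · exact lex_nil_false h'

lemma SA_lf_iter {n : ℕ} (SA : Equiv.Perm (Fin (n+1))) (i : Fin (n+1)) :
    ∀ p, p ≤ (SA i).val → (SA ((lf SA)^[p] i)).val = (SA i).val - p := by
  intro p
  induction p with
  | zero => simp
  | succ p ih =>
    intro hp
    have hih := ih (by omega)
    rw [Function.iterate_succ_apply']
    have : SA (lf SA ((lf SA)^[p] i)) = SA ((lf SA)^[p] i) - 1 :=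
      SA.apply_symm_apply _
    rw [this, Fin.coe_sub_one]
    have hne : SA ((lf SA)^[p] i) ≠ 0 := by
      intro e
      rw [e] at hih
      simp at hih
      omega
    rw [if_neg hne, hih]
    omega

lemma run_step {n : ℕ} {T : Fin (n+1) → ℕ} {SA : Equiv.Perm (Fin (n+1))}
    (hSA : IsSA T SA) {a b : Fin (n+1)}
    (hab : (a : ℕ) + 1 = (b : ℕ))
    (ha : (SA a).val ≠ 0) (hb : (SA b).val ≠ 0)
    (hc : T (SA a - 1) = T (SA b - 1)) :
    ((lf SA a : ℕ)) + 1 = (lf SA b : ℕ) := by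
  have hSAa0 : SA a ≠ 0 := fun e => ha (by rw [e]; rfl)
  have hSAb0 : SA b ≠ 0 := fun e => hb (by rw [e]; rfl)
  have hva : ((SA a - 1 : Fin (n+1)) : ℕ) = (SA a : ℕ) - 1 := by
    rw [Fin.coe_sub_one, if_neg hSAa0]
  have hvb : ((SA b - 1 : Fin (n+1)) : ℕ) = (SA b : ℕ) - 1 := by
    rw [Fin.coe_sub_one, if_neg hSAb0]
  have hsufa : sufList T (SA a - 1) = T (SA b - 1) :: sufList T (SA a) := by
    rw [sufList_cons, ← hc]
    congr 1
    rw [hva]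
    have : (SA a : ℕ) - 1 + 1 = (SA a : ℕ) := by omega
    rw [this]; rfl
  have hsufb : sufList T (SA b - 1) = T (SA b - 1) :: sufList T (SA b) := by
    rw [sufList_cons]
    congr 1
    rw [hvb]
    have : (SA b : ℕ) - 1 + 1 = (SA b : ℕ) := by omega
    rw [this]; rfl
  have hlab : a < b := by rw [Fin.lt_def]; omega
  have hSAlfa : SA (lf SA a) = SA a - 1 := SA.apply_symm_apply _
  have hSAlfb : SA (lf SA b) = SA b - 1 := SA.apply_symm_apply _
  have hlf : lf SA a < lf SA b := by
    rw [lt_iff_suf hSA, hSAlfa, hSAlfb, hsufa, hsufb]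
    exact List.Lex.cons (hSA a b hlab)
  -- no position strictly between lf a and lf b
  by_contra hne
  have hmid : (lf SA a : ℕ) + 1 < (lf SA b : ℕ) := by
    have := Fin.lt_def.mp hlf
    omega
  set m : Fin (n+1) := ⟨(lf SA a : ℕ) + 1, by omega⟩ with hmdef
  have h2 := hSA (lf SA a) m (by rw [Fin.lt_def]; simp [hmdef])
  have h3 := hSA m (lf SA b) (by rw [Fin.lt_def]; simpa [hmdef] using hmid)
  rw [hSAlfa, hsufa] at h2
  rw [hSAlfb, hsufb] at h3
  rw [sufList_cons T (SA m)] at h2 h3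
  have h2' : T (SA b - 1) < T (SA m) ∨
      (T (SA b - 1) = T (SA m) ∧
        List.Lex (· < ·) (sufList T (SA a)) ((List.ofFn T).drop ((SA m : ℕ) + 1))) := by
    exact lex_cons_inv h2
  have h3' : T (SA m) < T (SA b - 1) ∨
      (T (SA m) = T (SA b - 1) ∧
        List.Lex (· < ·) ((List.ofFn T).drop ((SA m : ℕ) + 1)) (sufList T (SA b))) := by
    exact lex_cons_inv h3
  rcases h2' with h2' | ⟨heq2, hx⟩
  · rcases h3' with h3' | ⟨heq3, _⟩
    · exact absurd h2' (lt_asymm h3')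
    · rw [heq3] at h2'; exact lt_irrefl _ h2'
  rcases h3' with h3' | ⟨_, hy⟩
  · rw [heq2] at h3'; exact lt_irrefl _ h3'
  -- SA m ≠ last
  have hmlast : (SA m : ℕ) < n := by
    by_contra hge
    have : (SA m : ℕ) = n := by have := (SA m).isLt; omega
    rw [this] at hx
    rw [List.drop_eq_nil_of_le (by simp)] at hx
    exact lex_nil_false hx
  have hrest : (List.ofFn T).drop ((SA m : ℕ) + 1) = sufList T (SA m + 1) := by
    unfold sufList
    congr 1
    rw [Fin.val_add_one_of_lt (by rw [Fin.lt_def]; simpa using hmlast)]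
  rw [hrest] at hx hy
  set q := SA.symm (SA m + 1) with hqdef
  have hq : SA q = SA m + 1 := SA.apply_symm_apply _
  rw [← hq] at hx hy
  have haq : a < q := (lt_iff_suf hSA).mpr hx
  have hqb : q < b := (lt_iff_suf hSA).mpr hy
  rw [Fin.lt_def] at haq hqb
  omega



/-- φ correctness: if for all p < k the positions LF^p(j) and
LF^p(j−1) = LF^p(j) − 1 lie in the same BWT run, while LF^k(j) starts a BWT run, then
SA[j−1] = SA[LF^k(j−1)] + k, SA[j] = SA[LF^k(j)] + k, and consequently
SA[j−1] = SA[LF^k(j)−1] + (SA[j] − SA[LF^k(j)]). -/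
theorem phi_correct {n : ℕ} (T : Fin (n+1) → ℕ) (SA : Equiv.Perm (Fin (n+1)))
    (hSA : IsSA T SA) (hT : Terminator T)
    (j : Fin (n+1)) (hj : j ≠ 0) (hSAj : (SA j).val ≠ 0) (k : ℕ)
    (hnowrap₁ : k < (SA j).val) (hnowrap₂ : k < (SA (j-1)).val)
    (hsame : ∀ p < k,
      bwt T SA ((lf SA)^[p] j) = bwt T SA ((lf SA)^[p] j - 1) ∧
      (lf SA)^[p] (j-1) = (lf SA)^[p] j - 1)
    (hstart : bwt T SA ((lf SA)^[k] j) ≠ bwt T SA ((lf SA)^[k] j - 1)) :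
    (SA (j-1)).val = (SA ((lf SA)^[k] (j-1))).val + k ∧
    (SA j).val = (SA ((lf SA)^[k] j)).val + k ∧
    (SA (j-1)).val =
      (SA ((lf SA)^[k] j - 1)).val + ((SA j).val - (SA ((lf SA)^[k] j)).val) := by
  have hk1 : k ≤ (SA j).val := le_of_lt hnowrap₁
  have hk2 : k ≤ (SA (j-1)).val := le_of_lt hnowrap₂
  have e1 : (SA ((lf SA)^[k] (j-1))).val = (SA (j-1)).val - k := SA_lf_iter SA _ k hk2
  have e2 : (SA ((lf SA)^[k] j)).val = (SA j).val - k := SA_lf_iter SA _ k hk1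
  refine ⟨by omega, by omega, ?_⟩
  have heqk : (lf SA)^[k] (j-1) = (lf SA)^[k] j - 1 := by
    rcases Nat.eq_zero_or_pos k with hk0 | hkpos
    · subst hk0; simp
    · obtain ⟨p, rfl⟩ : ∃ p, k = p + 1 := ⟨k-1, by omega⟩
      obtain ⟨hbwt, heq⟩ := hsame p (by omega)
      set b := (lf SA)^[p] j with hbdef
      have hSAb : (SA b).val = (SA j).val - p := SA_lf_iter SA j p (by omega)
      have hSAa : (SA ((lf SA)^[p] (j-1))).val = (SA (j-1)).val - p :=
        SA_lf_iter SA (j-1) p (by omega)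
      have hb0 : b ≠ 0 := by
        rcases Nat.eq_zero_or_pos p with hp0 | hpp
        · subst hp0; simpa [hbdef] using hj
        · intro e
          have hz := SA_zero hSA hT
          rw [e, hz, Fin.val_last] at hSAb
          have := (SA j).isLt
          omega
      have hbv : (b : ℕ) ≠ 0 := fun h => hb0 (Fin.ext h)
      have hab : ((b - 1 : Fin (n+1)) : ℕ) + 1 = (b : ℕ) := by
        rw [Fin.coe_sub_one, if_neg hb0]; omega
      have ha' : (SA (b - 1)).val ≠ 0 := by rw [← heq]; omega
      have hbv' : (SA b).val ≠ 0 := by omega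
      have hc : T (SA (b - 1) - 1) = T (SA b - 1) := by
        unfold bwt at hbwt; exact hbwt.symm
      have hstep := run_step hSA hab ha' hbv' hc
      rw [Function.iterate_succ_apply', Function.iterate_succ_apply', heq, ← hbdef]
      have hlfb0 : lf SA b ≠ 0 := by
        intro e; rw [e] at hstep; simp at hstep
      apply Fin.ext
      rw [Fin.coe_sub_one, if_neg hlfb0]
      omega
  rw [← heqk]
  omega
end
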